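/- Let d, t ∈ [ω]^ω be such that for each k ≥ 1 the interval [t(k−1), t(k)) contains at least k²+1 consecutive intervals of d (i.e., there are indices m with [d(m), d(m+k²+1)) ⊆ [t(k−1), t(k))). Let F be a finite nonempty family of infinite subsets of ω such that t(k) ≤ x(k) for all x ∈ F, for infinitely many k. Then ⋃F omits infinitely many intervals of d. -/
import Mathlib

open Set Filter

/-- The increasing enumeration of a set of naturals. -/
noncomputable def enum (s : Set ℕ) : ℕ → ℕ := Nat.nth (· ∈ s)

theorem enum_mem {s : Set ℕ} (hs : s.Infinite) (n : ℕ) : enum s n ∈ s :=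
  Nat.nth_mem_of_infinite (by simpa using hs) n

theorem enum_mono {s : Set ℕ} (hs : s.Infinite) : StrictMono (enum s) :=
  Nat.nth_strictMono (by simpa using hs)

/-- If `n ∈ x` and `n < enum x k` then `n` is among the first `k` values. -/
theorem mem_image_enum {x : Set ℕ} (hx : x.Infinite) {n k : ℕ} (hn : n ∈ x)
    (hlt : n < enum x k) : ∃ i < k, enum x i = n := by
  classical
  have hinf : {m | (· ∈ x) m}.Infinite := by simpa using hx
  refine ⟨Nat.count (· ∈ x) n, ?_, Nat.nth_count hn⟩
  have hle : Nat.count (· ∈ x) n ≤ k := Nat.le_nth_of_count_le hlt.le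
  rcases hle.lt_or_eq with h | h
  · exact h
  · exfalso
    have := Nat.nth_count (p := (· ∈ x)) hn
    rw [h] at this
    exact absurd this hlt.ne'

/-- Let `d, t ∈ [ω]^ω` be such that for every `k ≥ 1` the interval `[t(k−1), t(k))`
contains at least `k²+1` consecutive intervals of `d`, and let `F` be a finite nonempty
family of infinite subsets of `ω` such that for infinitely many `k`, `t(k) ≤ x(k)` for
all `x ∈ F`. Then `⋃F` omits infinitely many intervals of `d`. -/
theorem stmt11 (d t : Set ℕ) (hd : d.Infinite) (ht : t.Infinite)
    (hint : ∀ k : ℕ, 1 ≤ k → ∃ m : ℕ,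
      Set.Ico (enum d m) (enum d (m + k ^ 2 + 1)) ⊆ Set.Ico (enum t (k - 1)) (enum t k))
    (F : Finset (Set ℕ)) (hne : F.Nonempty) (hinf : ∀ x ∈ F, x.Infinite)
    (hJ : {k : ℕ | ∀ x ∈ F, enum t k ≤ enum x k}.Infinite) :
    {m : ℕ | (⋃₀ ↑F) ∩ Set.Ico (enum d m) (enum d (m + 1)) = ∅}.Infinite := by
  classical
  apply Set.infinite_of_forall_exists_gt
  intro N
  obtain ⟨k, hkJ, hkgt⟩ := hJ.exists_gt (max F.card (enum d N + 1))
  have hkF : F.card < k := lt_of_le_of_lt (le_max_left _ _) hkgt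
  have hkN : enum d N + 1 < k := lt_of_le_of_lt (le_max_right _ _) hkgt
  have hk1 : 1 ≤ k := by omega
  obtain ⟨m, hm⟩ := hint k hk1
  -- enum d m ∈ Ico (enum t (k-1)) (enum t k)
  have hdm : enum d m ∈ Set.Ico (enum t (k - 1)) (enum t k) := by
    apply hm
    exact ⟨le_rfl, enum_mono hd (by omega)⟩
  -- m > N
  have hmN : N < m := by
    have h1 : k - 1 ≤ enum t (k - 1) := Nat.le_nth fun hf => absurd (by simpa using hf) ht
    have h3 := hdm.1
    have h2 : enum d N < enum d m := by omega
    exact (enum_mono hd).lt_iff_lt.mp h2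
  -- find a good interval among the k^2 consecutive intervals of d
  by_contra hcon
  push_neg at hcon
  have hbad : ∀ i < k ^ 2, ((⋃₀ ↑F) ∩ Set.Ico (enum d (m + i)) (enum d (m + i + 1))).Nonempty := by
    intro i hi
    rcases Set.eq_empty_or_nonempty ((⋃₀ ↑F) ∩ Set.Ico (enum d (m + i)) (enum d (m + i + 1))) with h | h
    · have := hcon (m + i) h
      omega
    · exact h
  choose! f hf using hbad
  -- the target finset of candidate values
  set T : Finset ℕ := F.biUnion (fun x => (Finset.range k).image (enum x)) with hT
  have hfT : ∀ i ∈ Finset.range (k ^ 2), f i ∈ T := by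
    intro i hi
    rw [Finset.mem_range] at hi
    obtain ⟨⟨x, hxF, hfx⟩, hlo, hhi⟩ := hf i hi
    rw [Finset.mem_coe] at hxF
    have hfk : f i < enum x k := by
      have h1 : f i < enum t k := by
        have : f i ∈ Set.Ico (enum t (k - 1)) (enum t k) := hm ⟨le_trans (enum_mono hd |>.monotone (by omega)) hlo, lt_of_lt_of_le hhi (enum_mono hd |>.monotone (by omega))⟩
        exact this.2
      exact lt_of_lt_of_le h1 (hkJ x hxF)
    obtain ⟨j, hj, hje⟩ := mem_image_enum (hinf x hxF) hfx hfk
    simp only [hT, Finset.mem_biUnion, Finset.mem_image, Finset.mem_range]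
    exact ⟨x, hxF, j, hj, hje⟩
  have hinj : Set.InjOn f (Finset.range (k ^ 2)) := by
    intro i hi j hj hij
    rw [Finset.coe_range, Set.mem_Iio] at hi hj
    by_contra hne'
    wlog hlt : i < j generalizing i j
    · exact this hj hi hij.symm (Ne.symm hne') (by omega)
    have h1 : f i < enum d (m + i + 1) := (hf i hi).2.2
    have h2 : enum d (m + j) ≤ f j := (hf j hj).2.1
    have h3 : enum d (m + i + 1) ≤ enum d (m + j) := enum_mono hd |>.monotone (by omega)
    omega
  have hcard : k ^ 2 ≤ T.card := by
    calc k ^ 2 = (Finset.range (k ^ 2)).card := (Finset.card_range _).symm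
    _ ≤ T.card := Finset.card_le_card_of_injOn f hfT hinj
  have hTcard : T.card ≤ F.card * k := by
    apply le_trans (Finset.card_biUnion_le)
    apply le_trans (Finset.sum_le_sum fun x _ => le_trans Finset.card_image_le (Finset.card_range k).le)
    simp [Finset.sum_const, mul_comm]
  nlinarith
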